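/- Let N(m) denote the cardinality of the OP-LOCO code OPC(m). Then (N(m))^{1/m} → (7 + √65)/2 as m → ∞. (Hence the capacity of the OP-LOCO constraint is log₂((7 + √65)/2) ≈ 2.9129 input bits per coded symbol.) -/

import Mathlib

/-!
Call a pair `x y` risky if it begins a forbidden triple, i.e. `x ∈ {0,1,4,5}, y = 2` or
`x ∈ {2,3,6,7}, y = 5`. Extending an admissible word below its lowest position, a word whose
two lowest symbols form a risky pair has 4 admissible extensions, none of them risky again,
while any other admissible word has 8, exactly one of them risky. With `N m` admissible words
of length `m` and `S m` risky ones, `N (m+1) = 8 N m - 4 S m` and `S (m+1) = N m - S m` for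
`m ≥ 2`, hence `N (m+4) = 7 N (m+3) + 4 N (m+2)`. The roots `(7 ± √65)/2` of `x² = 7x + 4`
have distinct absolute values, so `N m / λ^m` tends to a positive constant for the larger
root `λ`, and `N m ^ (1/m) → λ`.
-/

/-- The OP-LOCO code: words of length `m` over the alphabet `{0,...,7}`
(position `m-1` most significant) containing no contiguous subword `u 2 v` with
`u, v ∈ {0,1,4,5}` and no contiguous subword `u 5 v` with `u, v ∈ {2,3,6,7}`. -/
def OPC (m : ℕ) : Set (Fin m → Fin 8) :=
  {c | ∀ i : ℕ, ∀ h : i + 2 < m,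
      ¬((c ⟨i + 2, h⟩ ∈ ({0, 1, 4, 5} : Set (Fin 8)) ∧ c ⟨i + 1, by omega⟩ = 2 ∧
            c ⟨i, by omega⟩ ∈ ({0, 1, 4, 5} : Set (Fin 8))) ∨
        (c ⟨i + 2, h⟩ ∈ ({2, 3, 6, 7} : Set (Fin 8)) ∧ c ⟨i + 1, by omega⟩ = 5 ∧
            c ⟨i, by omega⟩ ∈ ({2, 3, 6, 7} : Set (Fin 8))))}

open Filter Topology Finset

theorem linearRec_closed_form {a : ℕ → ℝ} {p q l μ : ℝ} (hl : l ^ 2 = p * l + q)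
    (hμ : μ ^ 2 = p * μ + q) (ha : ∀ n, a (n + 2) = p * a (n + 1) + q * a n) (n : ℕ) :
    (l - μ) * a n = (a 1 - μ * a 0) * l ^ n - (a 1 - l * a 0) * μ ^ n := by
  induction n using Nat.twoStepInduction with
  | zero => ring
  | one => ring
  | more n ih₀ ih₁ =>
    rw [ha]
    linear_combination p * ih₁ + q * ih₀ - (a 1 - μ * a 0) * l ^ n * hl
      + (a 1 - l * a 0) * μ ^ n * hμ

theorem tendsto_div_pow_of_linearRec {a : ℕ → ℝ} {p q l μ : ℝ} (hl : l ^ 2 = p * l + q)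
    (hμ : μ ^ 2 = p * μ + q) (hμl : |μ| < l) (ha : ∀ n, a (n + 2) = p * a (n + 1) + q * a n) :
    Tendsto (fun n => a n / l ^ n) atTop (𝓝 ((a 1 - μ * a 0) / (l - μ))) := by
  have hl₀ : 0 < l := (abs_nonneg μ).trans_lt hμl
  have hlμ : l - μ ≠ 0 := sub_ne_zero.2 (ne_of_gt (lt_of_le_of_lt (le_abs_self μ) hμl))
  have hratio : Tendsto (fun n => (μ / l) ^ n) atTop (𝓝 0) := by
    refine tendsto_pow_atTop_nhds_zero_of_abs_lt_one ?_
    rwa [abs_div, abs_of_pos hl₀, div_lt_one hl₀]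
  have hlim := ((hratio.const_mul (a 1 - l * a 0)).const_sub (a 1 - μ * a 0)).div_const (l - μ)
  rw [mul_zero, sub_zero] at hlim
  refine hlim.congr fun n => ?_
  have := linearRec_closed_form hl hμ ha n
  field_simp
  rw [div_pow, sub_mul, mul_assoc, div_mul_cancel₀ _ (pow_ne_zero n hl₀.ne'), this]
  ring

theorem tendsto_rpow_one_div_of_tendsto_div_pow {u : ℕ → ℝ} {r c : ℝ} (hu : ∀ n, 0 ≤ u n)
    (hr : 0 < r) (hc : 0 < c) (h : Tendsto (fun n => u n / r ^ n) atTop (𝓝 c)) :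
    Tendsto (fun n => u n ^ (1 / (n : ℝ))) atTop (𝓝 r) := by
  have hroot : Tendsto (fun n => (u n / r ^ n) ^ (1 / (n : ℝ))) atTop (𝓝 1) := by
    simpa only [Real.rpow_zero] using
      h.rpow tendsto_one_div_atTop_nhds_zero_nat (Or.inl hc.ne')
  rw [← mul_one r]
  refine (hroot.const_mul r).congr' (eventually_ne_atTop 0 |>.mono fun n hn => ?_)
  dsimp only
  rw [Real.div_rpow (hu n) (pow_nonneg hr.le n), one_div, Real.pow_rpow_inv_natCast hr.le hn,
    mul_div_cancel₀ _ hr.ne']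

theorem Fin.card_filter_cons {α : Type*} [Fintype α] {n : ℕ} (P : (Fin (n + 1) → α) → Prop)
    [DecidablePred P] : #{c | P c} = ∑ c : Fin n → α, #{z | P (Fin.cons z c)} := by
  simp only [card_filter]
  rw [← (Fin.consEquiv fun _ => α).sum_comp, Fintype.sum_prod_type, sum_comm]
  rfl

namespace OPC

def A : Finset (Fin 8) := {0, 1, 4, 5}

def B : Finset (Fin 8) := {2, 3, 6, 7}

def Forbidden (x y z : Fin 8) : Prop := (x ∈ A ∧ y = 2 ∧ z ∈ A) ∨ (x ∈ B ∧ y = 5 ∧ z ∈ B)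

def Risky (x y : Fin 8) : Prop := (x ∈ A ∧ y = 2) ∨ (x ∈ B ∧ y = 5)

instance (x y z : Fin 8) : Decidable (Forbidden x y z) := inferInstanceAs (Decidable (_ ∨ _))

instance : DecidableRel Risky := fun _ _ => inferInstanceAs (Decidable (_ ∨ _))

lemma card_not_forbidden (x y : Fin 8) :
    #{z | ¬Forbidden x y z} = if Risky x y then 4 else 8 := by
  revert x y; decide

lemma card_not_forbidden_risky (x y : Fin 8) :
    #{z | ¬Forbidden x y z ∧ Risky y z} = if Risky x y then 0 else 1 := by
  revert x y; decide

variable {m : ℕ}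

lemma mem_iff {c : Fin m → Fin 8} :
    c ∈ OPC m ↔ ∀ i (h : i + 2 < m),
      ¬Forbidden (c ⟨i + 2, h⟩) (c ⟨i + 1, by omega⟩) (c ⟨i, by omega⟩) := by
  simp only [OPC, Forbidden, A, B, Set.mem_ofPred_eq, Set.mem_insert_iff, Set.mem_singleton_iff,
    Finset.mem_insert, Finset.mem_singleton]

lemma cons_mem_iff {z : Fin 8} {c : Fin (m + 2) → Fin 8} :
    Fin.cons z c ∈ OPC (m + 3) ↔ c ∈ OPC (m + 2) ∧ ¬Forbidden (c 1) (c 0) z := by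
  simp only [mem_iff]
  refine ⟨fun H => ⟨fun i h => H (i + 1) (by omega), H 0 (Nat.le_add_left 3 m)⟩, ?_⟩
  rintro ⟨H, hz⟩ (_ | i) h
  · exact hz
  · exact H i (by omega)

lemma zero_mem : (0 : Fin m → Fin 8) ∈ OPC m :=
  mem_iff.2 fun _ _ => show ¬Forbidden 0 0 0 by decide

open scoped Classical in
noncomputable def words (m : ℕ) : Finset (Fin m → Fin 8) := {c | c ∈ OPC m}

lemma ncard_eq_card_words : (OPC m).ncard = #(words m) := by
  rw [← Set.ncard_coe_finset, words, coe_filter]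
  simp

lemma card_filter_words_succ (Q : Fin 8 → Fin 8 → Prop) [DecidableRel Q] :
    #{c ∈ words (m + 3) | Q (c 1) (c 0)} =
      ∑ c ∈ words (m + 2), #{z | ¬Forbidden (c 1) (c 0) z ∧ Q (c 0) z} := by
  rw [words, words, filter_filter, Fin.card_filter_cons, sum_filter]
  refine sum_congr rfl fun c _ => ?_
  split_ifs with hc
  · simp only [cons_mem_iff, hc, true_and, Fin.cons_one, Fin.cons_zero]
  · simp only [cons_mem_iff, hc, false_and, filter_false, card_empty]

lemma card_words_succ :
    #(words (m + 3)) + 4 * #{c ∈ words (m + 2) | Risky (c 1) (c 0)} = 8 * #(words (m + 2)) := by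
  have h := card_filter_words_succ (m := m) fun _ _ => True
  simp only [filter_true, and_true, card_not_forbidden] at h
  rw [h, card_filter, mul_sum, card_eq_sum_ones, mul_sum, ← sum_add_distrib]
  refine sum_congr rfl fun c _ => ?_
  split_ifs <;> rfl

lemma card_risky_succ :
    #{c ∈ words (m + 3) | Risky (c 1) (c 0)} + #{c ∈ words (m + 2) | Risky (c 1) (c 0)} =
      #(words (m + 2)) := by
  rw [card_filter_words_succ, card_filter, card_eq_sum_ones, ← sum_add_distrib]
  refine sum_congr rfl fun c _ => ?_
  rw [card_not_forbidden_risky]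
  split_ifs <;> rfl

lemma card_words_rec : #(words (m + 4)) = 7 * #(words (m + 3)) + 4 * #(words (m + 2)) := by
  have := card_words_succ (m := m)
  have : #(words (m + 4)) + 4 * #{c ∈ words (m + 3) | Risky (c 1) (c 0)} =
      8 * #(words (m + 3)) := card_words_succ
  have := card_risky_succ (m := m)
  omega

theorem exists_tendsto_ncard_div_pow :
    ∃ c > 0, Tendsto (fun m => ((OPC m).ncard : ℝ) / ((7 + √65) / 2) ^ m) atTop (𝓝 c) := by
  set l := (7 + √65) / 2 with hl_def
  set μ := (7 - √65) / 2 with hμ_def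
  have h65 : √65 ^ 2 = 65 := Real.sq_sqrt (by norm_num)
  have h7 : 7 < √65 := Real.lt_sqrt_of_sq_lt (by norm_num)
  have hl : l ^ 2 = 7 * l + 4 := by linear_combination h65 / 4
  have hμ : μ ^ 2 = 7 * μ + 4 := by linear_combination h65 / 4
  have hμl : |μ| < l := abs_lt.2 ⟨by linarith, by linarith⟩
  set a : ℕ → ℝ := fun n => #(words (n + 2))
  have ha : ∀ n, a (n + 2) = 7 * a (n + 1) + 4 * a n := fun n => by
    simp only [a]; exact_mod_cast card_words_rec
  have ha₀ : 0 < a 0 := by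
    simp only [a, Nat.cast_pos, card_pos]; exact ⟨0, by simp [words, zero_mem]⟩
  have hc : 0 < (a 1 - μ * a 0) / (l - μ) / l ^ 2 := by
    have : 0 ≤ a 1 := Nat.cast_nonneg _
    have : μ < 0 := by linarith
    have : 0 < l := by linarith
    exact div_pos (div_pos (by nlinarith) (by linarith)) (by positivity)
  refine ⟨_, hc, (tendsto_add_atTop_iff_nat 2).1 ?_⟩
  convert (tendsto_div_pow_of_linearRec hl hμ hμl ha).div_const (l ^ 2) using 2 with n
  rw [ncard_eq_card_words, pow_add, div_div]

end OPC

theorem stmt13 :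
    Filter.Tendsto (fun m : ℕ => ((OPC m).ncard : ℝ) ^ (1 / (m : ℝ)))
      Filter.atTop (nhds ((7 + Real.sqrt 65) / 2)) := by
  obtain ⟨c, hc, h⟩ := OPC.exists_tendsto_ncard_div_pow
  exact tendsto_rpow_one_div_of_tendsto_div_pow (fun _ => Nat.cast_nonneg _) (by positivity) hc h
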